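/- In ℂ[x₂,x₃,x₄,z₄,z₅,z₆], set G₆ = ½(6x₂z₄ − z₆). Then: ℒ₁G₆ = x₃z₄ − x₂z₅; ℒ₁²G₆ = x₄z₄ − x₂z₆; ℒ₁³G₆ = 8x₂(x₃z₄ − x₂z₅) + (x₄z₅ − x₃z₆) + 4z₄z₅; and ℒ₃G₆ = z₄z₅ − x₂(x₃z₄ − x₂z₅) − ½(x₄z₅ − x₃z₆). -/

import Mathlib

open MvPolynomial

noncomputable section

/-- The polynomial ring ℂ[x₂,x₃,x₄,z₄,z₅,z₆];
`X 0 = x₂`, `X 1 = x₃`, `X 2 = x₄`, `X 3 = z₄`, `X 4 = z₅`, `X 5 = z₆`. -/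
abbrev R6 : Type := MvPolynomial (Fin 6) ℂ

def x2 : R6 := X 0
def x3 : R6 := X 1
def x4 : R6 := X 2
def z4 : R6 := X 3
def z5 : R6 := X 4
def z6 : R6 := X 5

/-- P₅ = 4(3x₂x₃ + z₅) -/
def P5 : R6 := 4 * (3 * x2 * x3 + z5)
/-- P₇ = 4(2x₂z₅ + x₃z₄) -/
def P7 : R6 := 4 * (2 * x2 * z5 + x3 * z4)
/-- G₆' = x₃z₄ − x₂z₅ -/
def G6' : R6 := x3 * z4 - x2 * z5
/-- G₆'' = x₄z₄ − x₂z₆ -/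
def G6'' : R6 := x4 * z4 - x2 * z6
/-- G₆''' = 8x₂(x₃z₄ − x₂z₅) + (x₄z₅ − x₃z₆) + 4z₄z₅ -/
def G6''' : R6 := 8 * x2 * (x3 * z4 - x2 * z5) + (x4 * z5 - x3 * z6) + 4 * z4 * z5

/-- ℒ₁ = x₃∂/∂x₂ + x₄∂/∂x₃ + P₅∂/∂x₄ + z₅∂/∂z₄ + z₆∂/∂z₅ + P₇∂/∂z₆ -/
def L1 (P : R6) : R6 :=
  x3 * pderiv (0 : Fin 6) P + x4 * pderiv (1 : Fin 6) P + P5 * pderiv (2 : Fin 6) P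
    + z5 * pderiv (3 : Fin 6) P + z6 * pderiv (4 : Fin 6) P + P7 * pderiv (5 : Fin 6) P

/-- ℒ₃ = z₅∂/∂x₂ + z₆∂/∂x₃ + P₇∂/∂x₄ + G₆'∂/∂z₄ + G₆''∂/∂z₅ + G₆'''∂/∂z₆ -/
def L3 (P : R6) : R6 :=
  z5 * pderiv (0 : Fin 6) P + z6 * pderiv (1 : Fin 6) P + P7 * pderiv (2 : Fin 6) P
    + G6' * pderiv (3 : Fin 6) P + G6'' * pderiv (4 : Fin 6) P + G6''' * pderiv (5 : Fin 6) P

/-- G₆ = ½(6x₂z₄ − z₆) -/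
def G6 : R6 := C (1/2 : ℂ) * (6 * x2 * z4 - z6)

/-! `L1` and `L3` are the derivations of `R6` with prescribed values on the six generators, so each
identity is the Leibniz rule followed by a polynomial identity. -/

theorem sum_mul_pderiv_eq_mkDerivation {R σ : Type*} [CommSemiring R] [Fintype σ]
    (v : σ → MvPolynomial σ R) (p : MvPolynomial σ R) :
    ∑ i, v i * pderiv i p = mkDerivation R v p := by
  classical
  have sum_apply (q : MvPolynomial σ R) :
      (∑ i, v i • pderiv i) q = ∑ i, v i * pderiv i q := by
    rw [← Derivation.coeFnAddMonoidHom_apply, map_sum, Finset.sum_apply]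
    rfl
  have h : ∑ i, v i • pderiv i = mkDerivation R v := derivation_ext fun j => by
    simp [sum_apply, pderiv_X, Pi.single_apply]
  rw [← sum_apply, h]

theorem Derivation.map_ofNat {R A M : Type*} [CommSemiring R] [CommSemiring A] [AddCommMonoid M]
    [Algebra R A] [Module A M] [Module R M] (D : Derivation R A M) (n : ℕ) [n.AtLeastTwo] :
    D (ofNat(n) : A) = 0 :=
  D.map_natCast n

theorem C_half_mul_two {σ : Type*} : (C (1/2 : ℂ) : MvPolynomial σ ℂ) * 2 = 1 := by
  rw [← map_ofNat C 2, ← C_mul]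
  norm_num

def L1.derivation : Derivation ℂ R6 R6 := mkDerivation ℂ ![x3, x4, P5, z5, z6, P7]

def L3.derivation : Derivation ℂ R6 R6 := mkDerivation ℂ ![z5, z6, P7, G6', G6'', G6''']

theorem L1.derivation_apply (P : R6) : L1.derivation P = L1 P := by
  rw [L1.derivation, ← sum_mul_pderiv_eq_mkDerivation, Fin.sum_univ_six]
  rfl

theorem L3.derivation_apply (P : R6) : L3.derivation P = L3 P := by
  rw [L3.derivation, ← sum_mul_pderiv_eq_mkDerivation, Fin.sum_univ_six]
  rfl

theorem L1_G6 : L1 G6 = G6' := by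
  rw [← L1.derivation_apply, L1.derivation, G6]
  simp only [x2, x3, x4, z4, z5, z6, P5, P7, G6', derivation_C, Derivation.leibniz, map_sub,
    Derivation.map_ofNat, mkDerivation_X, Matrix.cons_val, smul_eq_mul]
  linear_combination (X 1 * X 3 - X 0 * X 4 : R6) * C_half_mul_two

theorem L1_G6' : L1 G6' = G6'' := by
  rw [← L1.derivation_apply, L1.derivation]
  simp only [x2, x3, x4, z4, z5, z6, P5, P7, G6', G6'', Derivation.leibniz, map_sub,
    mkDerivation_X, Matrix.cons_val, smul_eq_mul]
  ring

theorem L1_G6'' : L1 G6'' = G6''' := by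
  rw [← L1.derivation_apply, L1.derivation]
  simp only [x2, x3, x4, z4, z5, z6, P5, P7, G6'', G6''', Derivation.leibniz, map_sub,
    mkDerivation_X, Matrix.cons_val, smul_eq_mul]
  ring

theorem L3_G6 : L3 G6 = z4 * z5 - x2 * G6' - C (1/2 : ℂ) * (x4 * z5 - x3 * z6) := by
  rw [← L3.derivation_apply, L3.derivation, G6]
  simp only [x2, x3, x4, z4, z5, z6, P7, G6', G6'', G6''', derivation_C, Derivation.leibniz,
    map_sub, Derivation.map_ofNat, mkDerivation_X, Matrix.cons_val, smul_eq_mul]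
  linear_combination (X 3 * X 4 - X 0 * (X 1 * X 3 - X 0 * X 4) : R6) * C_half_mul_two

theorem derivatives_of_G6 :
    L1 G6 = x3 * z4 - x2 * z5 ∧
    L1 (L1 G6) = x4 * z4 - x2 * z6 ∧
    L1 (L1 (L1 G6)) = 8 * x2 * (x3 * z4 - x2 * z5) + (x4 * z5 - x3 * z6) + 4 * z4 * z5 ∧
    L3 G6 = z4 * z5 - x2 * (x3 * z4 - x2 * z5)
      - C (1/2 : ℂ) * (x4 * z5 - x3 * z6) := by
  rw [L1_G6, L1_G6', L1_G6'']
  exact ⟨rfl, rfl, rfl, L3_G6⟩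

end
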